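/- arXiv:math/0405590 — 4 statements merged into one kernel-verified Lean document; each statement's English description precedes it below -/
import Mathlib

section
/- Every injective endomorphism of B(1,n) with |n| > 1 induces the identity map on the quotient ℤ of the exact sequence 0 → K → B(1,n) → ℤ → 1. Consequently, every injective endomorphism of B(1,n) has infinitely many twisted conjugacy classes. -/
/-- The defining relation of the Baumslag-Solitar group `B(m,n)`:
`a⁻¹ bᵐ a = bⁿ`, where `a` is `FreeGroup.of false` and `b` is `FreeGroup.of true`. -/
def BSrel (m n : ℤ) : Set (FreeGroup Bool) :=
  {(FreeGroup.of false)⁻¹ * (FreeGroup.of true) ^ m * FreeGroup.of false *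
    ((FreeGroup.of true) ^ n)⁻¹}

/-- The Baumslag-Solitar group `B(m,n) = ⟨a, b | a⁻¹ bᵐ a = bⁿ⟩`. -/
abbrev BS (m n : ℤ) : Type := PresentedGroup (BSrel m n)

/-- The generator `a` of `B(m,n)`. -/
def BSa (m n : ℤ) : BS m n := PresentedGroup.of false

/-- The generator `b` of `B(m,n)`. -/
def BSb (m n : ℤ) : BS m n := PresentedGroup.of true

/-- Twisted conjugacy: `α` and `α'` are `φ`-conjugate if `α' = γ * α * φ(γ)⁻¹`
for some `γ`. -/
def twistedConj {G : Type*} [Group G] (φ : G →* G) (α α' : G) : Prop :=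
  ∃ γ : G, α' = γ * α * (φ γ)⁻¹

/-!
The affine representation `a ↦ (x ↦ x / n)`, `b ↦ (x ↦ x + 1)` embeds `B(1,n)` into `ℚ ⋊ ℤ`:
the kernel of the `a`-exponent map `π` is the abelian group `⋃ₖ aᵏ ⟨b⟩ a⁻ᵏ ≅ ℤ[1/n]`, on which
the representation is visibly injective. Applying `π` to the relation gives
`π(φ b) = n · π(φ b)`, so `φ(b)` lies in the kernel and acts as a translation by some `x`, nonzero
when `φ` is injective. Then `φ(a)⁻¹ φ(b) φ(a)` translates by `n ^ π(φ a) · x` and `φ(b) ^ n` by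
`n · x`, so `π(φ a) = 1` because `|n| > 1`. Hence `π ∘ φ = π`, and `π` descends to a surjection
from the `φ`-twisted conjugacy classes onto `ℤ`.
-/

open Multiplicative SemidirectProduct

theorem SemidirectProduct.inv_mul_inl_mul {N G : Type*} [CommGroup N] [Group G]
    {φ : G →* MulAut N} (g : N ⋊[φ] G) (x : N) :
    g⁻¹ * inl x * g = inl (φ g.right⁻¹ x) := by
  ext <;> simp [mul_comm]

theorem eq_one_of_zpow_eq_self {K : Type*} [Field K] [LinearOrder K] [IsStrictOrderedRing K]
    {q : K} (hq : 1 < |q|) {d : ℤ} (h : q ^ d = q) : d = 1 := by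
  have h' : |q| ^ d = |q| ^ (1 : ℤ) := by rw [← abs_zpow, h, zpow_one]
  exact zpow_right_injective₀ (by linarith) hq.ne' h'

theorem MonoidHom.ker_le_of_sup_zpowers_eq_top {G : Type*} [Group G]
    (χ : G →* Multiplicative ℤ) {a : G} (ha : χ a = ofAdd 1) {N : Subgroup G} [N.Normal]
    (hN : N ≤ χ.ker) (h : Subgroup.zpowers a ⊔ N = ⊤) : χ.ker ≤ N := by
  intro g hg
  obtain ⟨_, ⟨k, rfl⟩, x, hx, rfl⟩ :=
    Subgroup.mem_sup_of_normal_right.mp (h ▸ Subgroup.mem_top g)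
  have hk : k = 0 := by
    simpa [MonoidHom.mem_ker.mp (hN hx), ha, ← ofAdd_zsmul] using hg
  simpa [hk] using hx

theorem infinite_quot_twistedConj {G H : Type*} [Group G] [CommGroup H] [Infinite H]
    {φ : G →* G} (π : G →* H) (hπ : Function.Surjective π) (hφ : π.comp φ = π) :
    Infinite (Quot (twistedConj φ)) := by
  have hinv : ∀ α α', twistedConj φ α α' → π α = π α' := by
    rintro α _ ⟨γ, rfl⟩
    have hγ : π (φ γ) = π γ := DFunLike.congr_fun hφ γ
    simp [hγ, mul_comm]
  refine Infinite.of_surjective (Quot.lift π hinv) fun h => ?_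
  obtain ⟨g, rfl⟩ := hπ h
  exact ⟨Quot.mk _ g, rfl⟩

def zpowersScaling (u : ℚˣ) : Multiplicative ℤ →* MulAut (Multiplicative ℚ) :=
  (MulAutMultiplicative ℚ).symm.toMonoidHom.comp
    ((DistribMulAction.toAddAut ℚˣ ℚ).comp (zpowersHom ℚˣ u))

theorem zpowersScaling_apply (u : ℚˣ) (k : Multiplicative ℤ) (x : Multiplicative ℚ) :
    zpowersScaling u k x = ofAdd (((u ^ k.toAdd : ℚˣ) : ℚ) * x.toAdd) := rfl

namespace BS

theorem inv_a_mul_b_zpow_mul_a (m n : ℤ) : (BSa m n)⁻¹ * BSb m n ^ m * BSa m n = BSb m n ^ n :=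
  mul_inv_eq_one.mp <| by
    have h := PresentedGroup.one_of_mem (rels := BSrel m n) rfl
    rw [map_mul, map_mul, map_mul, map_inv, map_inv, map_zpow, map_zpow] at h
    exact h

variable (n : ℤ)

local notation "a" => BSa 1 n
local notation "b" => BSb 1 n

theorem inv_a_pow_mul_b_zpow_mul_a_pow (k : ℕ) (m : ℤ) :
    (a ^ k)⁻¹ * b ^ m * a ^ k = b ^ (m * n ^ k) := by
  induction k with
  | zero => simp
  | succ k ih =>
    calc (a ^ (k + 1))⁻¹ * b ^ m * a ^ (k + 1)
        = a⁻¹ * ((a ^ k)⁻¹ * b ^ m * a ^ k) * a := by group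
      _ = MulAut.conj a⁻¹ b ^ (m * n ^ k) := by
        rw [ih, ← map_zpow, MulAut.conj_apply, inv_inv]
      _ = b ^ (m * n ^ (k + 1)) := by
        rw [MulAut.conj_apply, inv_inv, ← zpow_one b, inv_a_mul_b_zpow_mul_a, zpow_one,
          ← zpow_mul]
        ring_nf

theorem a_pow_mul_b_zpow_mul_inv_a_pow (k : ℕ) (m : ℤ) :
    a ^ k * b ^ (m * n ^ k) * (a ^ k)⁻¹ = b ^ m := by
  rw [← inv_a_pow_mul_b_zpow_mul_a_pow]
  group

theorem conj_a_pow_eq_conj_a_pow_add (k l : ℕ) (m : ℤ) :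
    a ^ k * b ^ m * (a ^ k)⁻¹ = a ^ (k + l) * b ^ (m * n ^ l) * (a ^ (k + l))⁻¹ := by
  conv_lhs => rw [← a_pow_mul_b_zpow_mul_inv_a_pow n l m]
  group

/-- The kernel of the `a`-exponent map, as the increasing union of the cyclic groups
`aᵏ ⟨b⟩ a⁻ᵏ`, `k ≥ 0`. -/
def K : Subgroup (BS 1 n) where
  carrier := {g | ∃ (k : ℕ) (m : ℤ), g = a ^ k * b ^ m * (a ^ k)⁻¹}
  one_mem' := ⟨0, 0, by simp⟩
  mul_mem' := by
    rintro _ _ ⟨k, m, rfl⟩ ⟨l, p, rfl⟩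
    refine ⟨k + l, m * n ^ l + p * n ^ k, ?_⟩
    rw [conj_a_pow_eq_conj_a_pow_add n k l, conj_a_pow_eq_conj_a_pow_add n l k, add_comm l k,
      zpow_add]
    group
  inv_mem' := by
    rintro _ ⟨k, m, rfl⟩
    exact ⟨k, -m, by group⟩

theorem b_mem_centralizer_K : b ∈ Subgroup.centralizer (K n : Set (BS 1 n)) := by
  rintro _ ⟨k, m, rfl⟩
  have hb : a ^ k * b ^ n ^ k * (a ^ k)⁻¹ = b := by
    simpa using a_pow_mul_b_zpow_mul_inv_a_pow n k 1
  simpa only [MulAut.conj_apply, hb] using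
    ((Commute.zpow_zpow_self b m (n ^ k)).map (MulAut.conj (a ^ k))).eq

theorem a_mem_normalizer_K : a ∈ Subgroup.normalizer (K n : Set (BS 1 n)) := by
  refine Subgroup.mem_normalizer_iff.mpr fun g => ⟨?_, ?_⟩
  · rintro ⟨k, m, rfl⟩
    exact ⟨k + 1, m, by group⟩
  · rintro ⟨k, m, hg⟩
    refine ⟨k, m * n, ?_⟩
    rw [conj_a_pow_eq_conj_a_pow_add n k 1, pow_one] at hg
    calc g = a⁻¹ * (a * g * a⁻¹) * a := by group
      _ = a ^ k * b ^ (m * n) * (a ^ k)⁻¹ := by rw [hg]; group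

instance K_normal : (K n).Normal := by
  rw [← Subgroup.normalizer_eq_top_iff, eq_top_iff]
  refine fun g _ => PresentedGroup.generated_by _ _ (fun x => ?_) g
  cases x
  · exact a_mem_normalizer_K n
  · exact Subgroup.centralizer_le_normalizer _ (b_mem_centralizer_K n)

theorem sup_zpowers_a_K : Subgroup.zpowers a ⊔ K n = ⊤ := by
  rw [eq_top_iff]
  refine fun g _ => PresentedGroup.generated_by _ _ (fun x => ?_) g
  cases x
  · exact Subgroup.mem_sup_left (Subgroup.mem_zpowers a)
  · exact Subgroup.mem_sup_right ⟨0, 1, by simp [BSb]⟩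

theorem K_le_ker {H : Type*} [CommGroup H] (χ : BS 1 n →* H) (hb : χ b = 1) : K n ≤ χ.ker := by
  rintro _ ⟨k, m, rfl⟩
  simp [hb, mul_comm]

theorem map_b_eq_one (hn : n ≠ 1) (χ : BS 1 n →* Multiplicative ℤ) : χ b = 1 := by
  have h := congrArg χ (inv_a_mul_b_zpow_mul_a 1 n)
  rw [map_mul, map_mul, map_inv, zpow_one, inv_mul_cancel_comm, map_zpow] at h
  have h' : (n - 1) * toAdd (χ b) = 0 := by
    have := congrArg toAdd h
    rw [toAdd_zpow, smul_eq_mul] at this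
    linarith
  simpa [sub_eq_zero, hn] using h'

def toAffine (hn : n ≠ 0) : BS 1 n →*
    Multiplicative ℚ ⋊[zpowersScaling (Units.mk0 (n : ℚ) (by exact_mod_cast hn))⁻¹]
      Multiplicative ℤ :=
  PresentedGroup.toGroup (f := fun x => cond x (inl (ofAdd 1)) (inr (ofAdd 1))) <| by
    rintro _ rfl
    simp only [FreeGroup.lift_apply_of, map_mul, map_inv, map_zpow, cond_true, cond_false]
    rw [mul_inv_eq_one, zpow_one, inv_mul_inl_mul, right_inr, zpowersScaling_apply, ← map_zpow,
      ← ofAdd_zsmul, zsmul_one]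
    simp

theorem toAffine_a (hn : n ≠ 0) : toAffine n hn a = inr (ofAdd 1) :=
  PresentedGroup.toGroup.of _

theorem toAffine_b (hn : n ≠ 0) : toAffine n hn b = inl (ofAdd 1) :=
  PresentedGroup.toGroup.of _

theorem b_ne_one (hn : n ≠ 0) : b ≠ 1 := fun h => by
  have h' := congrArg (toAffine n hn) h
  rw [map_one, toAffine_b, map_eq_one_iff _ inl_injective] at h'
  exact one_ne_zero (congrArg toAdd h')

theorem toAffine_conj_a_pow (hn : n ≠ 0) (k : ℕ) (m : ℤ) :
    toAffine n hn (a ^ k * b ^ m * (a ^ k)⁻¹) = inl (ofAdd ((n : ℚ)⁻¹ ^ k * m)) := by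
  rw [map_mul, map_mul, map_inv, map_pow, map_zpow, toAffine_a, toAffine_b, ← map_pow, ← map_zpow,
    ← map_inv, ← inl_aut, zpowersScaling_apply]
  simp

theorem toAffine_injective (hn : n ≠ 0) : Function.Injective (toAffine n hn) := by
  set χ := rightHom.comp (toAffine n hn)
  refine (injective_iff_map_eq_one _).mpr fun g hg => ?_
  have hχa : χ a = ofAdd 1 := by simp [χ, toAffine_a]
  have hχb : χ b = 1 := by simp [χ, toAffine_b]
  have hg' : g ∈ χ.ker := by simp [χ, hg]
  obtain ⟨k, m, rfl⟩ :=
    χ.ker_le_of_sup_zpowers_eq_top hχa (K_le_ker n χ hχb) (sup_zpowers_a_K n) hg'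
  rw [toAffine_conj_a_pow, map_eq_one_iff _ inl_injective] at hg
  have hm : m = 0 := by simpa [hn] using hg
  simp [hm]

theorem rightHom_comp_toAffine (hn : n ≠ 0) (χ : BS 1 n →* Multiplicative ℤ)
    (ha : χ a = ofAdd 1) (hb : χ b = 1) : rightHom.comp (toAffine n hn) = χ :=
  PresentedGroup.ext fun
    | false => by
      change (toAffine n hn a).right = χ a
      rw [toAffine_a, right_inr, ha]
    | true => by
      change (toAffine n hn b).right = χ b
      rw [toAffine_b, right_inl, hb]

theorem map_a_of_injective (hn : 1 < |n|) (χ : BS 1 n →* Multiplicative ℤ)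
    (ha : χ a = ofAdd 1) (hb : χ b = 1) {φ : BS 1 n →* BS 1 n} (hφ : Function.Injective φ) :
    χ (φ a) = ofAdd 1 := by
  have hn0 : n ≠ 0 := by rintro rfl; simp at hn
  have hn1 : n ≠ 1 := by rintro rfl; simp at hn
  set ρ := toAffine n hn0
  set A := ρ (φ a)
  set B := ρ (φ b)
  have hBright : B.right = 1 := map_b_eq_one n hn1 ((rightHom.comp ρ).comp φ)
  have hB : inl B.left = B := by ext <;> simp [hBright]
  have hBleft : B.left ≠ 1 := by
    intro h
    refine b_ne_one n hn0 (hφ (toAffine_injective n hn0 ?_))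
    change B = ρ (φ 1)
    rw [← hB, h, map_one, map_one, map_one]
  have hrel : A⁻¹ * B * A = B ^ n := by
    simpa [A, B] using congrArg (ρ ∘ φ) (inv_a_mul_b_zpow_mul_a 1 n)
  rw [← hB, inv_mul_inl_mul, ← map_zpow, inl_inj, zpowersScaling_apply] at hrel
  have hd : (n : ℚ) ^ A.right.toAdd = n := by
    simpa [toAdd_zpow, hBleft] using congrArg toAdd hrel
  rw [← rightHom_comp_toAffine n hn0 χ ha hb]
  exact toAdd.injective (eq_one_of_zpow_eq_self (by exact_mod_cast hn) hd)

end BS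

/-- For `|n| > 1`, every injective endomorphism `φ` of `B(1,n)` induces the identity on
the quotient `ℤ` of the sequence `0 → K → B(1,n) → ℤ → 1` (i.e. `π ∘ φ = π` for the
`a`-exponent-sum map `π`), and consequently `φ` has infinitely many twisted
conjugacy classes. -/
theorem BS_one_n_injective_reidemeister_infinite (n : ℤ) (hn : 1 < |n|)
    (φ : BS 1 n →* BS 1 n) (hφ : Function.Injective φ)
    (π : BS 1 n →* Multiplicative ℤ)
    (ha : π (BSa 1 n) = Multiplicative.ofAdd 1) (hb : π (BSb 1 n) = 1) :
    π.comp φ = π ∧ Infinite (Quot (twistedConj φ)) := by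
  have hn1 : n ≠ 1 := by rintro rfl; simp at hn
  have hcomp : π.comp φ = π := PresentedGroup.ext fun
    | false => (BS.map_a_of_injective n hn π ha hb hφ).trans ha.symm
    | true => (BS.map_b_eq_one n hn1 (π.comp φ)).trans hb.symm
  have hπ : Function.Surjective π := fun z => ⟨BSa 1 n ^ z.toAdd, by simp [ha, ← ofAdd_zsmul]⟩
  exact ⟨hcomp, infinite_quot_twistedConj π hπ hcomp⟩
end

section
/- Every automorphism of the Klein bottle group ℤ ⋊ ℤ (with the generator of the second factor acting on ℤ by multiplication by −1) has infinitely many twisted conjugacy classes; that is, the Klein bottle group has property R_∞. -/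
/-- The action of `ℤ` on `ℤ` where the generator `1` acts by multiplication by `-1`. -/
def kbAction : Multiplicative ℤ →* MulAut (Multiplicative ℤ) :=
  zpowersHom _ (MulEquiv.inv (Multiplicative ℤ))

/-- The Klein bottle group `ℤ ⋊ ℤ`, with the generator of the second factor acting on
the first by multiplication by `-1`. -/
abbrev KleinBottleGroup : Type := Multiplicative ℤ ⋊[kbAction] Multiplicative ℤ

namespace KB
open SemidirectProduct Multiplicative

def b : KleinBottleGroup := inl (ofAdd 1)
def a : KleinBottleGroup := inr (ofAdd 1)

lemma rel : a * b * a⁻¹ = b⁻¹ := by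
  rw [a, b, ← map_inv, ← inl_aut, ← map_inv]; congr 1

lemma inl_eq_b_zpow (x : Multiplicative ℤ) : (inl x : KleinBottleGroup) = b ^ x.toAdd := by
  rw [b, ← map_zpow]; congr 1; simp [← ofAdd_zsmul]

lemma b_zpow (m : ℤ) : b ^ m = (inl (ofAdd m) : KleinBottleGroup) := by
  rw [inl_eq_b_zpow]; simp

lemma inr_eq_a_zpow (x : Multiplicative ℤ) : (inr x : KleinBottleGroup) = a ^ x.toAdd := by
  rw [a, ← map_zpow]; congr 1; simp [← ofAdd_zsmul]

lemma decomp (g : KleinBottleGroup) : g = b ^ g.left.toAdd * a ^ g.right.toAdd := by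
  rw [← inl_eq_b_zpow, ← inr_eq_a_zpow, inl_left_mul_inr_right]

lemma a_mul_b_zpow (c : ℤ) : a * b ^ c = b ^ (-c) * a := by
  have h : a * b ^ c * a⁻¹ = b ^ (-c) := by
    rw [← conj_zpow, rel, inv_zpow, zpow_neg]
  rw [← h]; group

/-- any hom to ℤ kills b -/
lemma hom_b (f : KleinBottleGroup →* Multiplicative ℤ) : f b = 1 := by
  have h : f b⁻¹ = f b := by
    rw [← rel]; simp [mul_comm]
  have h2 : toAdd (f b) = 0 := by
    have := congrArg toAdd h
    simp at this
    omega
  have : f b = ofAdd 0 := by rw [← h2]; rfl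
  simpa using this

lemma pi_one {γ : KleinBottleGroup} (h : rightHom γ = 1) : γ = b ^ γ.left.toAdd := by
  have hr : γ.right = 1 := by simpa [rightHom] using h
  conv_lhs => rw [decomp γ]
  rw [hr]; simp

lemma twc_equiv (ψ : KleinBottleGroup →* KleinBottleGroup) : Equivalence (twistedConj ψ) := by
  constructor
  · exact fun x => ⟨1, by simp⟩
  · rintro x y ⟨γ, rfl⟩
    exact ⟨γ⁻¹, by simp [mul_assoc]⟩
  · rintro x y z ⟨γ, rfl⟩ ⟨γ', rfl⟩
    exact ⟨γ' * γ, by simp [mul_assoc]⟩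

lemma infinite_of_fam (ψ : KleinBottleGroup →* KleinBottleGroup) (fam : ℤ → KleinBottleGroup)
    (h : ∀ i j, twistedConj ψ (fam i) (fam j) → i = j) :
    Infinite (Quot (twistedConj ψ)) := by
  refine Infinite.of_injective (fun i => Quot.mk _ (fam i)) ?_
  intro i j hij
  rw [Quot.eq, Equivalence.eqvGen_iff (twc_equiv ψ)] at hij
  exact h i j hij

end KB

open SemidirectProduct Multiplicative KB in
/-- Every automorphism of the Klein bottle group `ℤ ⋊ ℤ` has infinitely many twisted
conjugacy classes; i.e. the Klein bottle group has property `R∞`. -/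
theorem kleinBottle_R_infty (φ : KleinBottleGroup ≃* KleinBottleGroup) :
    Infinite (Quot (twistedConj φ.toMonoidHom)) := by
  classical
  set ψ := φ.toMonoidHom with hψ
  set π : KleinBottleGroup →* Multiplicative ℤ := rightHom with hπ
  set pf : KleinBottleGroup →* Multiplicative ℤ := π.comp ψ with hpf
  set K : ℤ := toAdd (pf a) with hK
  have hπa : π a = ofAdd 1 := by simp [hπ, a]
  have hπb : π b = 1 := by simp [hπ, b]
  have hpfb : pf b = 1 := hom_b pf
  have hpf : ∀ g, pf g = ofAdd (toAdd (π g) * K) := by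
    intro g
    conv_lhs => rw [decomp g]
    rw [map_mul, map_zpow, map_zpow, hpfb, one_zpow, one_mul]
    have hg : π g = g.right := by simp [hπ, rightHom]
    rw [hg, show pf a = ofAdd K by simp [hK]]
    simp [← ofAdd_zsmul, mul_comm]
  -- K = ±1
  have hKunit : K = 1 ∨ K = -1 := by
    obtain ⟨g, hg⟩ := φ.surjective a
    have h1 : pf g = ofAdd 1 := by
      have : pf g = π (ψ g) := rfl
      rw [this, show ψ g = a from hg, hπa]
    rw [hpf g] at h1
    have h2 := congrArg toAdd h1
    simp at h2
    exact Int.eq_one_or_neg_one_of_mul_eq_one h2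
  rcases hKunit with hK1 | hK1
  · -- K = 1 : π is invariant, use a^i
    refine infinite_of_fam ψ (fun i => a ^ i) ?_
    rintro i j ⟨γ, h⟩
    have hπeq := congrArg (fun g => toAdd (π g)) h
    simp only [map_mul, map_inv, map_zpow, toAdd_mul, toAdd_inv, toAdd_zpow] at hπeq
    have hpfγ : toAdd (π (ψ γ)) = toAdd (π γ) := by
      have : π (ψ γ) = pf γ := rfl
      rw [this, hpf, hK1]; simp
    rw [hpfγ] at hπeq
    rw [show toAdd (π a) = 1 by rw [hπa]; rfl] at hπeq
    simp only [smul_eq_mul] at hπeq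
    omega
  · -- K = -1
    have hpg : ∀ γ, toAdd (π (ψ γ)) = -toAdd (π γ) := by
      intro γ
      have : π (ψ γ) = pf γ := rfl
      rw [this, hpf, hK1]; simp
    -- ψ b is a power of b
    have hψb : ψ b = b ^ toAdd ((ψ b).left) := by
      apply pi_one
      have h0 : rightHom (ψ b) = pf b := rfl
      rw [h0, hpfb]
    set D : ℤ := toAdd ((ψ b).left) with hD
    have hDunit : D = 1 ∨ D = -1 := by
      obtain ⟨g, hg⟩ := φ.surjective b
      have hπg : π g = 1 := by
        have h1 : toAdd (π (ψ g)) = -toAdd (π g) := hpg g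
        rw [show ψ g = b from hg] at h1
        rw [show toAdd (π b) = 0 by rw [hπb]; rfl] at h1
        have : π g = ofAdd 0 := by rw [show (0:ℤ) = toAdd (π g) by omega]; rfl
        simpa using this
      have hgb : g = b ^ g.left.toAdd := pi_one hπg
      have h5 : ψ g = b ^ (D * g.left.toAdd) := by
        conv_lhs => rw [hgb]
        rw [map_zpow, hψb, ← zpow_mul]
      rw [show ψ g = b from hg] at h5
      have h5' : (inl (ofAdd (1:ℤ)) : KleinBottleGroup) = inl (ofAdd (D * g.left.toAdd)) := by
        rw [← b_zpow, ← b_zpow, zpow_one]; exact h5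
      have h3 : g.left.toAdd * D = 1 := by
        simpa using (congrArg toAdd (inl_injective h5')).symm
      rcases Int.eq_one_or_neg_one_of_mul_eq_one' h3 with ⟨_, hh⟩ | ⟨_, hh⟩
      · left; exact hh
      · right; exact hh
    rcases hDunit with hD1 | hD1
    · -- D = 1 : ψ b = b, use b^i
      refine infinite_of_fam ψ (fun i => b ^ i) ?_
      rintro i j ⟨γ, h⟩
      have hπeq := congrArg (fun g => toAdd (π g)) h
      simp only [map_mul, map_inv, map_zpow, toAdd_mul, toAdd_inv, toAdd_zpow, hpg γ] at hπeq
      rw [show toAdd (π b) = 0 by rw [hπb]; rfl] at hπeq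
      simp only [smul_eq_mul] at hπeq
      have hπγ : π γ = 1 := by
        have : π γ = ofAdd 0 := by rw [show (0:ℤ) = toAdd (π γ) by omega]; rfl
        simpa using this
      have hγ := pi_one hπγ
      rw [hγ, map_zpow, hψb, hD1, zpow_one] at h
      simp only [b_zpow, ← map_inv, ← map_mul] at h
      have h6 := congrArg toAdd (inl_injective h)
      simp at h6
      omega
    · -- D = -1 : ψ b = b⁻¹, use b^i * a
      refine infinite_of_fam ψ (fun i => b ^ i * a) ?_
      rintro i j ⟨γ, h⟩
      have hπeq := congrArg (fun g => toAdd (π g)) h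
      simp only [map_mul, map_inv, map_zpow, toAdd_mul, toAdd_inv, toAdd_zpow, hpg γ] at hπeq
      rw [show toAdd (π b) = 0 by rw [hπb]; rfl,
        show toAdd (π a) = 1 by rw [hπa]; rfl] at hπeq
      simp only [smul_eq_mul] at hπeq
      have hπγ : π γ = 1 := by
        have : π γ = ofAdd 0 := by rw [show (0:ℤ) = toAdd (π γ) by omega]; rfl
        simpa using this
      have hγ := pi_one hπγ
      set c := γ.left.toAdd with hc
      rw [hγ, map_zpow, hψb, hD1, ← zpow_mul] at h
      have hrw : b ^ c * (b ^ i * a) * (b ^ ((-1) * c))⁻¹ = b ^ i * a := by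
        rw [show ((-1:ℤ)) * c = -c by ring, ← zpow_neg, neg_neg]
        have hab : a * b ^ c = b ^ (-c) * a := a_mul_b_zpow c
        calc b ^ c * (b ^ i * a) * b ^ c
            = b ^ c * b ^ i * (a * b ^ c) := by group
          _ = b ^ c * b ^ i * (b ^ (-c) * a) := by rw [hab]
          _ = b ^ c * b ^ i * b ^ (-c) * a := by group
          _ = b ^ (c + i + -c) * a := by rw [← zpow_add, ← zpow_add]
          _ = b ^ i * a := by rw [show c + i + -c = i by ring]
      rw [hrw] at h
      have h7 : b ^ j = b ^ i := mul_right_cancel h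
      rw [b_zpow, b_zpow] at h7
      have h6 := congrArg toAdd (inl_injective h7)
      simp at h6
      omega
end

section
/- The endomorphism φ of the Klein bottle group ℤ ⋊ ℤ = ⟨x, y | y⁻¹xy = x⁻¹⟩ defined by φ(x) = x² and φ(y) = y³ is injective and has Reidemeister number R(φ) = 4. -/
/-- The generator `x` of the Klein bottle group. -/
def kbX : KleinBottleGroup := SemidirectProduct.inl (Multiplicative.ofAdd 1)

/-- The generator `y` of the Klein bottle group. -/
def kbY : KleinBottleGroup := SemidirectProduct.inr (Multiplicative.ofAdd 1)

/-! Write elements as `x ^ a * y ^ b`. Twisting the conjugation by `φ(x) = x²`, `φ(y) = y³`,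
`x ^ c * y ^ d` sends `(a, b)` to `(c + (-1) ^ d * a - 2 * (-1) ^ b * c, b - 2 * d)`. Hence the
parity of `b` is invariant; for even `b` every `a` is reached, giving one class, while for
`b = 2 * k + 1` the move is `(a, k) ↦ ((-1) ^ d * a + 3 * c, k - d)`, so `(-1) ^ k * a` modulo `3`
is a complete invariant, giving three more classes. -/

open Multiplicative Function

theorem Nat.card_quot_eq_of_iff {α β : Type*} {r : α → α → Prop} (f : α → β)
    (hf : Surjective f) (hr : ∀ x y, r x y ↔ f x = f y) : Nat.card (Quot r) = Nat.card β := by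
  obtain rfl : r = fun x y => f x = f y := by ext x y; exact hr x y
  exact Nat.card_congr (Setoid.quotientKerEquivOfSurjective f hf)

theorem MulEquiv.inv_sq (G : Type*) [CommGroup G] : (MulEquiv.inv G : MulAut G) ^ 2 = 1 := by
  ext; simp [sq]

theorem kbAction_ofAdd (d : ℤ) : kbAction (ofAdd d) = MulEquiv.inv (Multiplicative ℤ) ^ d :=
  zpowersHom_apply ..

theorem kbAction_sq (g : Multiplicative ℤ) : kbAction g ^ 2 = 1 := by
  rw [← ofAdd_toAdd g, kbAction_ofAdd, ← zpow_natCast, ← zpow_mul, mul_comm, zpow_mul,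
    zpow_natCast, MulEquiv.inv_sq, one_zpow]

theorem kbAction_pow_of_odd (g : Multiplicative ℤ) {n : ℕ} (hn : Odd n) :
    kbAction g ^ n = kbAction g := by
  obtain ⟨j, rfl⟩ := hn
  rw [pow_succ, pow_mul, kbAction_sq, one_pow, one_mul]

theorem kbAction_ofAdd_apply (d a : ℤ) :
    kbAction (ofAdd d) (ofAdd a) = ofAdd ((d.negOnePow : ℤ) * a) := by
  obtain ⟨k, rfl | rfl⟩ := Int.even_or_odd' d
  · rw [kbAction_ofAdd, zpow_mul, zpow_ofNat, MulEquiv.inv_sq, one_zpow, Int.negOnePow_two_mul]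
    simp
  · rw [kbAction_ofAdd, zpow_add_one, zpow_mul, zpow_ofNat, MulEquiv.inv_sq, one_zpow,
      Int.negOnePow_two_mul_add_one]
    simp

namespace KleinBottleGroup

/-- The element `x ^ a * y ^ b`. -/
def mk (a b : ℤ) : KleinBottleGroup := ⟨ofAdd a, ofAdd b⟩

@[simp]
theorem toAdd_mk_left (a b : ℤ) : toAdd (mk a b).left = a := rfl

@[simp]
theorem toAdd_mk_right (a b : ℤ) : toAdd (mk a b).right = b := rfl

theorem exists_eq_mk (g : KleinBottleGroup) : ∃ a b, g = mk a b :=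
  ⟨toAdd g.left, toAdd g.right, rfl⟩

theorem mk_inj {a b a' b' : ℤ} : mk a b = mk a' b' ↔ a = a' ∧ b = b' := by
  simp [mk, SemidirectProduct.ext_iff]

theorem mk_mul_mk (a b a' b' : ℤ) :
    mk a b * mk a' b' = mk (a + (b.negOnePow : ℤ) * a') (b + b') := by
  ext
  · show ofAdd a * kbAction (ofAdd b) (ofAdd a') = _
    rw [kbAction_ofAdd_apply]
    rfl
  · rfl

theorem inv_mk (a b : ℤ) : (mk a b)⁻¹ = mk (-((b.negOnePow : ℤ) * a)) (-b) := by
  ext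
  · show kbAction (ofAdd (-b)) (ofAdd (-a)) = _
    rw [kbAction_ofAdd_apply, Int.negOnePow_neg, mul_neg]
    rfl
  · rfl

/-- The endomorphism `x ↦ x ^ m`, `y ↦ y ^ n`; it is well defined because `y ^ n` acts on
`⟨x⟩` like `y` when `n` is odd. -/
def powEndo (m n : ℕ) (hn : Odd n) : KleinBottleGroup →* KleinBottleGroup :=
  SemidirectProduct.map (powMonoidHom m) (powMonoidHom n) fun g => by
    refine MonoidHom.ext fun x => ?_
    change kbAction g x ^ m = kbAction (g ^ n) (x ^ m)
    rw [map_pow kbAction, kbAction_pow_of_odd g hn, map_pow]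

section

variable {m n : ℕ} (hn : Odd n)

theorem powEndo_kbX : powEndo m n hn kbX = kbX ^ m := by
  simp [powEndo, kbX]

theorem powEndo_kbY : powEndo m n hn kbY = kbY ^ n := by
  simp [powEndo, kbY]

theorem powEndo_mk (a b : ℤ) : powEndo m n hn (mk a b) = mk (m * a) (n * b) := by
  ext
  · simp [powEndo, mk, ← ofAdd_nsmul]
  · simp [powEndo, mk, ← ofAdd_nsmul]

theorem powEndo_injective (hm : m ≠ 0) : Injective (powEndo m n hn) := by
  intro g g' h
  obtain ⟨a, b, rfl⟩ := exists_eq_mk g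
  obtain ⟨a', b', rfl⟩ := exists_eq_mk g'
  rw [powEndo_mk, powEndo_mk, mk_inj] at h
  have hn0 : (n : ℤ) ≠ 0 := by exact_mod_cast hn.pos.ne'
  rw [mk_inj]
  exact ⟨mul_left_cancel₀ (Int.natCast_ne_zero.mpr hm) h.1, mul_left_cancel₀ hn0 h.2⟩

theorem mk_mul_mk_mul_powEndo_inv (a b c d : ℤ) :
    mk c d * mk a b * (powEndo m n hn (mk c d))⁻¹ =
      mk (c + (d.negOnePow : ℤ) * a - (b.negOnePow : ℤ) * (m * c)) (b - (n - 1) * d) := by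
  have hsign : ((d + b).negOnePow : ℤ) * ((n * d).negOnePow : ℤ) = b.negOnePow := by
    rw [← Units.val_mul, ← Int.negOnePow_add, (Int.negOnePow_eq_iff _ _).mpr]
    obtain ⟨j, rfl⟩ := hn
    exact ⟨(j + 1) * d, by push_cast; ring⟩
  rw [powEndo_mk, inv_mk, mk_mul_mk, mk_mul_mk, mk_inj]
  constructor
  · linear_combination (-(m * c : ℤ)) * hsign
  · ring

theorem twistedConj_powEndo_mk_iff (a b a' b' : ℤ) :
    twistedConj (powEndo m n hn) (mk a b) (mk a' b') ↔
      ∃ c d : ℤ, a' = c + (d.negOnePow : ℤ) * a - (b.negOnePow : ℤ) * (m * c) ∧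
        b' = b - (n - 1) * d := by
  constructor
  · rintro ⟨γ, hγ⟩
    obtain ⟨c, d, rfl⟩ := exists_eq_mk γ
    rw [mk_mul_mk_mul_powEndo_inv, mk_inj] at hγ
    exact ⟨c, d, hγ⟩
  · rintro ⟨c, d, ha, hb⟩
    exact ⟨mk c d, by rw [mk_mul_mk_mul_powEndo_inv, ha, hb]⟩

end

def sqCubeEndo : KleinBottleGroup →* KleinBottleGroup := powEndo 2 3 (by decide)

theorem twistedConj_sqCubeEndo_mk_iff (a b a' b' : ℤ) :
    twistedConj sqCubeEndo (mk a b) (mk a' b') ↔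
      ∃ c d : ℤ, a' = c + (d.negOnePow : ℤ) * a - (b.negOnePow : ℤ) * (2 * c) ∧
        b' = b - 2 * d := by
  rw [sqCubeEndo, twistedConj_powEndo_mk_iff]
  norm_num

theorem even_iff_even_of_twistedConj_sqCubeEndo {a b a' b' : ℤ}
    (h : twistedConj sqCubeEndo (mk a b) (mk a' b')) : Even b ↔ Even b' := by
  obtain ⟨c, d, -, rfl⟩ := (twistedConj_sqCubeEndo_mk_iff a b a' b').mp h
  rw [Int.even_sub, iff_true_right (even_two_mul d)]

theorem twistedConj_sqCubeEndo_mk_two_mul (a a' k k' : ℤ) :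
    twistedConj sqCubeEndo (mk a (2 * k)) (mk a' (2 * k')) := by
  rw [twistedConj_sqCubeEndo_mk_iff]
  refine ⟨((k - k').negOnePow : ℤ) * a - a', k - k', ?_, by ring⟩
  rw [Int.negOnePow_two_mul]
  push_cast
  ring

theorem twistedConj_sqCubeEndo_mk_two_mul_add_one_iff (a a' k k' : ℤ) :
    twistedConj sqCubeEndo (mk a (2 * k + 1)) (mk a' (2 * k' + 1)) ↔
      (((k'.negOnePow : ℤ) * a' : ℤ) : ZMod 3) = ((k.negOnePow : ℤ) * a : ℤ) := by
  have hsq : (k'.negOnePow : ℤ) * k'.negOnePow = 1 := Int.units_coe_mul_self _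
  have hsign : (k'.negOnePow : ℤ) * k.negOnePow = (k - k').negOnePow := by
    rw [Int.negOnePow_sub, Units.val_mul, mul_comm]
  have hsign' : (k'.negOnePow : ℤ) * (k - k').negOnePow = k.negOnePow := by
    rw [← Units.val_mul, ← Int.negOnePow_add, add_sub_cancel]
  rw [twistedConj_sqCubeEndo_mk_iff, Int.negOnePow_two_mul_add_one,
    ZMod.intCast_eq_intCast_iff_dvd_sub]
  push_cast
  constructor
  · rintro ⟨c, d, ha, hb⟩
    obtain rfl : d = k - k' := by linarith
    refine ⟨-k'.negOnePow * c, ?_⟩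
    linear_combination -(k'.negOnePow : ℤ) * ha - a * hsign'
  · rintro ⟨e, he⟩
    refine ⟨-k'.negOnePow * e, k - k', ?_, by ring⟩
    linear_combination -(k'.negOnePow : ℤ) * he - a' * hsq + a * hsign

/-- A complete invariant of the twisted conjugacy classes of `sqCubeEndo`: `none` is the class
of all `x ^ a * y ^ b` with `b` even; for `b = 2 * k + 1` (so `b / 2 = k`) the class is read off
`(-1) ^ k * a` modulo `3`. -/
def sqCubeInvariant (g : KleinBottleGroup) : Option (ZMod 3) :=
  if Even (toAdd g.right) then none
  else some (((toAdd g.right / 2).negOnePow : ℤ) * toAdd g.left : ℤ)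

theorem sqCubeInvariant_mk_two_mul (a k : ℤ) : sqCubeInvariant (mk a (2 * k)) = none :=
  if_pos (even_two_mul k)

theorem sqCubeInvariant_mk_two_mul_add_one (a k : ℤ) :
    sqCubeInvariant (mk a (2 * k + 1)) = some (((k.negOnePow : ℤ) * a : ℤ) : ZMod 3) := by
  have hk : (2 * k + 1) / 2 = k := by omega
  rw [sqCubeInvariant, toAdd_mk_right, toAdd_mk_left, if_neg (Int.not_even_two_mul_add_one k), hk]

theorem twistedConj_sqCubeEndo_iff (g g' : KleinBottleGroup) :
    twistedConj sqCubeEndo g g' ↔ sqCubeInvariant g = sqCubeInvariant g' := by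
  obtain ⟨a, b, rfl⟩ := exists_eq_mk g
  obtain ⟨a', b', rfl⟩ := exists_eq_mk g'
  obtain ⟨k, rfl | rfl⟩ := Int.even_or_odd' b <;>
    obtain ⟨k', rfl | rfl⟩ := Int.even_or_odd' b'
  · simp [sqCubeInvariant_mk_two_mul, twistedConj_sqCubeEndo_mk_two_mul]
  · rw [sqCubeInvariant_mk_two_mul, sqCubeInvariant_mk_two_mul_add_one]
    refine iff_of_false (fun h => ?_) (Option.some_ne_none _).symm
    exact Int.not_even_two_mul_add_one k'
      ((even_iff_even_of_twistedConj_sqCubeEndo h).mp (even_two_mul k))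
  · rw [sqCubeInvariant_mk_two_mul, sqCubeInvariant_mk_two_mul_add_one]
    refine iff_of_false (fun h => ?_) (Option.some_ne_none _)
    exact Int.not_even_two_mul_add_one k
      ((even_iff_even_of_twistedConj_sqCubeEndo h).mpr (even_two_mul k'))
  · rw [twistedConj_sqCubeEndo_mk_two_mul_add_one_iff, sqCubeInvariant_mk_two_mul_add_one,
      sqCubeInvariant_mk_two_mul_add_one, Option.some_inj, eq_comm]

theorem sqCubeInvariant_surjective : Surjective sqCubeInvariant := by
  rintro (_ | z)
  · exact ⟨mk 0 0, sqCubeInvariant_mk_two_mul 0 0⟩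
  · refine ⟨mk z.val (2 * 0 + 1), ?_⟩
    rw [sqCubeInvariant_mk_two_mul_add_one]
    simp

end KleinBottleGroup

open KleinBottleGroup in
/-- The endomorphism of the Klein bottle group defined by `x ↦ x²`, `y ↦ y³` is
injective and has Reidemeister number `4`. -/
theorem kleinBottle_endo_reidemeister_four :
    ∃ φ : KleinBottleGroup →* KleinBottleGroup,
      φ kbX = kbX ^ 2 ∧ φ kbY = kbY ^ 3 ∧ Function.Injective φ ∧
        Nat.card (Quot (twistedConj φ)) = 4 := by
  refine ⟨sqCubeEndo, powEndo_kbX _, powEndo_kbY _, powEndo_injective _ two_ne_zero, ?_⟩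
  rw [Nat.card_quot_eq_of_iff sqCubeInvariant sqCubeInvariant_surjective
    twistedConj_sqCubeEndo_iff]
  simp
end

section
/- For m > 1, every injective endomorphism φ of B(m,m) maps the center ⟨bᵐ⟩ into itself. -/
/-!
Let `ρ : B(m,m) → GL₂(ℂ[X])` send `a ↦ [[1, X], [0, 1]]` and `b ↦ [[1, 0], [ζ - 1, ζ]]` for a
primitive `m`-th root of unity `ζ`. Its kernel is the centre `⟨bᵐ⟩`: `ρ` factors through
`B(m,m)/⟨bᵐ⟩ ≅ ℤ ∗ ℤ/m`, on which it is faithful by the ping-pong lemma. The only scalar matrix in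
its image is `1`: a scalar matrix in `GL₂(ℂ[X])` is a constant multiple of `1`, and at `X = 0`
the image of `ρ` fixes `(1, -1)`.

For an injective `φ`, the matrix `ρ(φ bᵐ)` commutes with `ρ(φ a)` and `ρ(φ b)`. If it is scalar,
then `φ bᵐ ∈ ker ρ = ⟨bᵐ⟩`. Otherwise its commutant is commutative, so `ρ(φ a)` and `ρ(φ b)`
commute. Then `φ [a, b] ∈ ker ρ` is central, so `[a, b]` commutes with `b` because `φ` is
injective, and `ρ` shows that it does not.
-/

open scoped MatrixGroups commutatorElement
open Polynomial Monoid

section ZModHom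

variable {G : Type*} [Group G] {M : ℕ}

def zmodHom (g : G) (hg : g ^ M = 1) : Multiplicative (ZMod M) →* G :=
  AddMonoidHom.toMultiplicativeLeft <| ZMod.lift M
    ⟨zmultiplesHom (Additive G) (Additive.ofMul g), by simpa using congrArg Additive.ofMul hg⟩

@[simp]
theorem zmodHom_ofAdd_intCast (g : G) (hg : g ^ M = 1) (k : ℤ) :
    zmodHom g hg (Multiplicative.ofAdd (k : ZMod M)) = g ^ k := by
  simp [zmodHom]

theorem exists_zmodHom_eq_zpow (g : G) (hg : g ^ M = 1) {x : Multiplicative (ZMod M)}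
    (hx : x ≠ 1) : ∃ k : ℤ, ¬ (M : ℤ) ∣ k ∧ zmodHom g hg x = g ^ k := by
  obtain ⟨k, hk⟩ := ZMod.intCast_surjective (Multiplicative.toAdd x)
  rw [← ofAdd_toAdd x, ← hk] at hx ⊢
  refine ⟨k, fun hdvd => hx ?_, zmodHom_ofAdd_intCast g hg k⟩
  rw [(ZMod.intCast_zmod_eq_zero_iff_dvd k M).mpr hdvd, ofAdd_zero]

end ZModHom

section CyclicCoprod

variable {ι : Type*} (n : ι → ℕ)

/-- `ZMod 0 = ℤ`, so a factor with `nᵢ = 0` is infinite cyclic. -/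
abbrev CyclicCoprod : Type _ := CoprodI fun i => Multiplicative (ZMod (n i))

namespace CyclicCoprod

def gen (i : ι) : CyclicCoprod n := CoprodI.of (i := i) (Multiplicative.ofAdd 1)

theorem gen_pow (i : ι) : gen n i ^ n i = 1 := by
  rw [gen, ← map_pow, ← ofAdd_nsmul, nsmul_one, ZMod.natCast_self, ofAdd_zero, map_one]

variable {n} {G : Type*} [Group G]

def lift (x : ι → G) (hx : ∀ i, x i ^ n i = 1) : CyclicCoprod n →* G :=
  CoprodI.lift fun i => zmodHom (x i) (hx i)

@[simp]
theorem lift_gen (x : ι → G) (hx : ∀ i, x i ^ n i = 1) (i : ι) : lift x hx (gen n i) = x i := by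
  simpa [lift, gen] using zmodHom_ofAdd_intCast (x i) (hx i) 1

end CyclicCoprod

end CyclicCoprod

namespace Matrix

variable {R : Type*} [CommRing R]

theorem commute_iff_fin_two {X Y : Matrix (Fin 2) (Fin 2) R} :
    Commute X Y ↔ X 0 1 * Y 1 0 = Y 0 1 * X 1 0 ∧
      (X 0 0 - X 1 1) * Y 0 1 = X 0 1 * (Y 0 0 - Y 1 1) ∧
      (X 0 0 - X 1 1) * Y 1 0 = X 1 0 * (Y 0 0 - Y 1 1) := by
  rw [Commute, SemiconjBy, ← Matrix.ext_iff, Fin.forall_fin_two, Fin.forall_fin_two,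
    Fin.forall_fin_two]
  simp only [Matrix.mul_apply, Fin.sum_univ_two]
  constructor
  · rintro ⟨⟨h00, h01⟩, h10, -⟩
    exact ⟨by linear_combination h00, by linear_combination h01, by linear_combination -h10⟩
  · rintro ⟨h1, h2, h3⟩
    exact ⟨⟨by linear_combination h1, by linear_combination h2⟩, by linear_combination -h3,
      by linear_combination -h1⟩

/-- `A` commutes with `B` iff `(A₀₀ - A₁₁, A₀₁, A₁₀)` and `(B₀₀ - B₁₁, B₀₁, B₁₀)` are parallel,
and parallelism to a nonzero vector is transitive. -/
theorem commute_of_commute_of_forall_ne_scalar [NoZeroDivisors R]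
    {A B C : Matrix (Fin 2) (Fin 2) R} (hA : ∀ r, A ≠ scalar (Fin 2) r)
    (hB : Commute A B) (hC : Commute A C) : Commute B C := by
  have hA' : A 0 0 - A 1 1 ≠ 0 ∨ A 0 1 ≠ 0 ∨ A 1 0 ≠ 0 := by
    by_contra! h
    refine hA (A 0 0) (Matrix.ext fun i j => ?_)
    fin_cases i <;> fin_cases j <;> simp [h.2.1, h.2.2, sub_eq_zero.mp h.1]
  rw [commute_iff_fin_two] at hB hC ⊢
  obtain ⟨hB1, hB2, hB3⟩ := hB
  obtain ⟨hC1, hC2, hC3⟩ := hC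
  rcases hA' with h | h | h <;> refine ⟨?_, ?_, ?_⟩ <;> exact mul_left_cancel₀ h (by grind)

end Matrix

namespace BaumslagSolitar

section Presentation

variable {m n : ℤ} {G : Type*} [Group G]

def lift (x y : G) (h : x⁻¹ * y ^ m * x = y ^ n) : BS m n →* G :=
  PresentedGroup.toGroup (f := fun i => bif i then y else x) <| by
    rintro r rfl
    simpa using mul_inv_eq_one.mpr h

@[simp]
theorem lift_a (x y : G) (h : x⁻¹ * y ^ m * x = y ^ n) : lift x y h (BSa m n) = x :=
  PresentedGroup.toGroup.of _

@[simp]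
theorem lift_b (x y : G) (h : x⁻¹ * y ^ m * x = y ^ n) : lift x y h (BSb m n) = y :=
  PresentedGroup.toGroup.of _

theorem hom_ext {f g : BS m n →* G} (ha : f (BSa m n) = g (BSa m n))
    (hb : f (BSb m n) = g (BSb m n)) : f = g :=
  PresentedGroup.ext fun | false => ha | true => hb

theorem rel : (BSa m n)⁻¹ * BSb m n ^ m * BSa m n = BSb m n ^ n := by
  have h := PresentedGroup.one_of_mem (rels := BSrel m n) rfl
  simp only [map_mul, map_inv, map_zpow, mul_inv_eq_one] at h
  exact h

end Presentation

theorem commute_b_zpow (m : ℤ) (g : BS m m) : Commute (BSb m m ^ m) g := by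
  have hg : g ∈ Subgroup.centralizer {BSb m m ^ m} := by
    refine PresentedGroup.generated_by _ _ (fun i => ?_) g
    rw [Subgroup.mem_centralizer_singleton_iff]
    cases i
    · have h : (BSa m m)⁻¹ * (BSb m m ^ m * BSa m m) = BSb m m ^ m := by rw [← mul_assoc, rel]
      exact (inv_mul_eq_iff_eq_mul.mp h).symm
    · exact (Commute.self_zpow (BSb m m) m).eq
  exact (Subgroup.mem_centralizer_singleton_iff.mp hg).symm

theorem b_zpow_mem_center (m : ℤ) : BSb m m ^ m ∈ Subgroup.center (BS m m) :=
  Subgroup.mem_center_iff.mpr fun g => (commute_b_zpow m g).eq.symm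

theorem zpowers_b_zpow_le_center (m : ℤ) :
    Subgroup.zpowers (BSb m m ^ m) ≤ Subgroup.center (BS m m) :=
  Subgroup.zpowers_le.mpr (b_zpow_mem_center m)

instance (m : ℤ) : (Subgroup.zpowers (BSb m m ^ m)).Normal :=
  ⟨fun _ hn g => by rwa [Subgroup.mem_center_iff.mp (zpowers_b_zpow_le_center m hn) g,
    mul_inv_cancel_right]⟩

abbrev factorOrder (M : ℕ) (i : Bool) : ℕ := bif i then M else 0

def toCoprod (M : ℕ) : BS M M →* CyclicCoprod (factorOrder M) :=
  lift (CyclicCoprod.gen _ false) (CyclicCoprod.gen _ true) (by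
    have h : CyclicCoprod.gen (factorOrder M) true ^ M = 1 := CyclicCoprod.gen_pow _ true
    rw [zpow_natCast, h]
    group)

def ofCoprod (M : ℕ) :
    CyclicCoprod (factorOrder M) →* BS M M ⧸ Subgroup.zpowers (BSb M M ^ (M : ℤ)) :=
  CyclicCoprod.lift (fun i => bif i then (BSb M M : BS M M ⧸ _) else (BSa M M : BS M M ⧸ _)) <| by
    rintro (_ | _)
    · exact pow_zero _
    · rw [cond_true, ← QuotientGroup.mk_pow, QuotientGroup.eq_one_iff, ← zpow_natCast]
      exact Subgroup.mem_zpowers _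

theorem ofCoprod_comp_toCoprod (M : ℕ) :
    (ofCoprod M).comp (toCoprod M) = QuotientGroup.mk' _ :=
  hom_ext (by simp [ofCoprod, toCoprod]) (by simp [ofCoprod, toCoprod])

theorem mem_zpowers_of_toCoprod_eq_one {M : ℕ} {g : BS M M} (hg : toCoprod M g = 1) :
    g ∈ Subgroup.zpowers (BSb M M ^ (M : ℤ)) := by
  rw [← QuotientGroup.eq_one_iff, ← QuotientGroup.mk'_apply, ← ofCoprod_comp_toCoprod,
    MonoidHom.comp_apply, hg, map_one]

section Representation

variable {R : Type*} [CommRing R]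

noncomputable def unipotent : Multiplicative R →* GL (Fin 2) R[X] :=
  MonoidHom.toHomUnits
    { toFun := fun c => !![1, C c.toAdd * X; 0, 1]
      map_one' := by simp [Matrix.one_fin_two]
      map_mul' := fun c d => by
        rw [Matrix.mul_fin_two, toAdd_mul, C_add]
        ring_nf }

noncomputable def lowerTri : Rˣ →* GL (Fin 2) R[X] :=
  MonoidHom.toHomUnits
    { toFun := fun c => !![1, 0; C (c : R) - 1, C (c : R)]
      map_one' := by simp [Matrix.one_fin_two]
      map_mul' := fun c d => by
        rw [Matrix.mul_fin_two, Units.val_mul, C_mul]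
        ring_nf }

theorem unipotent_val (c : Multiplicative R) :
    (unipotent c).val = !![1, C c.toAdd * X; 0, 1] :=
  rfl

theorem lowerTri_val (c : Rˣ) : (lowerTri c).val = !![1, 0; C (c : R) - 1, C (c : R)] := rfl

theorem unipotent_smul (c : R) (v : Fin 2 → R[X]) :
    unipotent (Multiplicative.ofAdd c) • v = ![v 0 + C c * X * v 1, v 1] := by
  ext i; fin_cases i <;> simp [Units.smul_def, unipotent_val, Matrix.mulVec, dotProduct]

theorem lowerTri_smul (c : Rˣ) (v : Fin 2 → R[X]) :
    lowerTri c • v = ![v 0, (C (c : R) - 1) * v 0 + C (c : R) * v 1] := by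
  ext i; fin_cases i <;> simp [Units.smul_def, lowerTri_val, Matrix.mulVec, dotProduct]

def pingPongSet : Bool → Set (Fin 2 → R[X])
  | false => {v | (v 1).degree < (v 0).degree}
  | true => {v | v 1 ≠ 0 ∧ (v 0).degree ≤ (v 1).degree}

theorem unipotent_smul_mem [IsDomain R] {c : R} (hc : c ≠ 0) {v : Fin 2 → R[X]}
    (hv : v ∈ pingPongSet true) : unipotent (Multiplicative.ofAdd c) • v ∈ pingPongSet false := by
  obtain ⟨hv1, hdeg⟩ := hv
  have hlt : (v 0).degree < (C c * X * v 1).degree := by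
    rw [mul_assoc, degree_C_mul hc, mul_comm]
    exact hdeg.trans_lt (degree_lt_degree_mul_X hv1)
  simp only [pingPongSet, Set.mem_ofPred_eq, unipotent_smul, Matrix.cons_val_zero,
    Matrix.cons_val_one]
  rw [degree_add_eq_right_of_degree_lt hlt, mul_assoc, degree_C_mul hc, mul_comm]
  exact degree_lt_degree_mul_X hv1

theorem lowerTri_smul_mem [IsDomain R] {c : Rˣ} (hc : c ≠ 1) {v : Fin 2 → R[X]}
    (hv : v ∈ pingPongSet false) : lowerTri c • v ∈ pingPongSet true := by
  have hc' : (c : R) - 1 ≠ 0 := sub_ne_zero.mpr (Units.val_eq_one.not.mpr hc)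
  have hv0 : v 0 ≠ 0 := fun h => by simp [pingPongSet, h] at hv
  have hlt : (C (c : R) * v 1).degree < ((C (c : R) - 1) * v 0).degree := by
    rw [degree_C_mul c.ne_zero, ← C_1, ← C_sub, degree_C_mul hc']
    exact hv
  have hdeg : ((C (c : R) - 1) * v 0 + C (c : R) * v 1).degree = (v 0).degree := by
    rw [degree_add_eq_left_of_degree_lt hlt, ← C_1, ← C_sub, degree_C_mul hc']
  simp only [pingPongSet, Set.mem_ofPred_eq, lowerTri_smul, Matrix.cons_val_zero,
    Matrix.cons_val_one]
  refine ⟨fun h => hv0 ?_, hdeg.ge⟩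
  rwa [h, degree_zero, eq_comm, degree_eq_bot] at hdeg

theorem commutator_unipotent_lowerTri_apply_zero_one (c : Rˣ) :
    (⁅unipotent (Multiplicative.ofAdd (1 : R)), lowerTri c⁆ : GL (Fin 2) R[X]).val 0 1 =
      C (c⁻¹ * (c - 1) : R) * (X * (1 - X)) := by
  rw [commutatorElement_def, ← map_inv (unipotent (R := R)), ← map_inv lowerTri, Units.val_mul,
    Units.val_mul, Units.val_mul, unipotent_val, unipotent_val, lowerTri_val, lowerTri_val,
    Matrix.mul_fin_two, Matrix.mul_fin_two, Matrix.mul_fin_two, toAdd_inv, toAdd_ofAdd,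
    Matrix.of_apply]
  simp only [Matrix.cons_val_zero, Matrix.cons_val_one, Matrix.cons_val_fin_one, map_neg, map_one,
    C_mul, C_sub]
  ring

theorem not_commute_commutator_unipotent_lowerTri [IsDomain R] {c : Rˣ} (hc : c ≠ 1) :
    ¬ Commute ⁅unipotent (Multiplicative.ofAdd (1 : R)), lowerTri c⁆ (lowerTri c) := by
  intro h
  have h01 := (Matrix.commute_iff_fin_two.mp (h.map (Units.coeHom _))).2.1
  rw [Units.coeHom_apply, Units.coeHom_apply, commutator_unipotent_lowerTri_apply_zero_one,
    lowerTri_val] at h01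
  simp only [Matrix.of_apply, Matrix.cons_val_zero, Matrix.cons_val_one, Matrix.cons_val',
    Matrix.cons_val_fin_one, mul_zero] at h01
  have hc' : (c : R) ≠ 1 := Units.val_eq_one.not.mpr hc
  refine mul_ne_zero (mul_ne_zero ?_ (mul_ne_zero X_ne_zero ?_)) ?_ h01.symm
  · exact C_ne_zero.mpr (mul_ne_zero (Units.ne_zero _) (sub_ne_zero.mpr hc'))
  · rw [← neg_sub, neg_ne_zero, ← C_1]
    exact X_sub_C_ne_zero 1
  · rw [← C_1, ← C_sub, C_ne_zero]
    exact sub_ne_zero.mpr hc'.symm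

variable {M : ℕ} {ζ : Rˣ} (hζ : IsPrimitiveRoot ζ M)

noncomputable def coprodRep : CyclicCoprod (factorOrder M) →* GL (Fin 2) R[X] :=
  CyclicCoprod.lift (fun i => bif i then lowerTri ζ else unipotent (Multiplicative.ofAdd 1)) <| by
    rintro (_ | _)
    · exact pow_zero _
    · change lowerTri ζ ^ M = 1
      rw [← map_pow, hζ.pow_eq_one, map_one]

theorem coprodRep_injective [IsDomain R] [CharZero R] : Function.Injective (coprodRep hζ) := by
  refine CoprodI.lift_injective_of_ping_pong _ (.inr ⟨false, ?_⟩) (pingPongSet (R := R)) ?_ ?_ ?_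
  · have : Infinite (Multiplicative (ZMod (factorOrder M false))) := inferInstanceAs (Infinite ℤ)
    exact Cardinal.natCast_lt_aleph0.le.trans (Cardinal.aleph0_le_mk _)
  · rintro (_ | _)
    exacts [⟨![X, 1], by simp [pingPongSet]⟩, ⟨![1, 1], by simp [pingPongSet]⟩]
  · rintro (_ | _) (_ | _) hij <;> simp only [ne_eq, not_true_eq_false] at hij <;>
      refine Set.disjoint_left.mpr fun v h1 h2 => ?_ <;>
      simp only [pingPongSet, Set.mem_ofPred_eq] at h1 h2
    exacts [h2.2.not_gt h1, h1.2.not_gt h2]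
  · rintro (_ | _) (_ | _) hij x hx _ ⟨v, hv, rfl⟩ <;>
      simp only [ne_eq, not_true_eq_false] at hij
    · obtain ⟨k, hk, hxk⟩ := exists_zmodHom_eq_zpow (M := factorOrder M false)
        (unipotent (Multiplicative.ofAdd (1 : R))) (pow_zero _) hx
      change zmodHom (unipotent (Multiplicative.ofAdd (1 : R))) _ x • v ∈ _
      rw [hxk, ← map_zpow, ← ofAdd_zsmul, zsmul_one]
      exact unipotent_smul_mem (Int.cast_ne_zero.mpr (by simpa using hk)) hv
    · obtain ⟨k, hk, hxk⟩ := exists_zmodHom_eq_zpow (M := M) (lowerTri ζ)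
        (by rw [← map_pow, hζ.pow_eq_one, map_one]) hx
      change zmodHom (lowerTri ζ) _ x • v ∈ _
      rw [hxk, ← map_zpow]
      exact lowerTri_smul_mem (mt (hζ.zpow_eq_one_iff_dvd k).mp hk) hv

noncomputable def rep : BS M M →* GL (Fin 2) R[X] :=
  (coprodRep hζ).comp (toCoprod M)

@[simp]
theorem rep_a : rep hζ (BSa M M) = unipotent (Multiplicative.ofAdd 1) := by
  simp [rep, toCoprod, coprodRep]

@[simp]
theorem rep_b : rep hζ (BSb M M) = lowerTri ζ := by
  simp [rep, toCoprod, coprodRep]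

theorem mem_zpowers_of_rep_eq_one [IsDomain R] [CharZero R] {g : BS M M} (hg : rep hζ g = 1) :
    g ∈ Subgroup.zpowers (BSb M M ^ (M : ℤ)) :=
  mem_zpowers_of_toCoprod_eq_one <|
    (injective_iff_map_eq_one' _).mp (coprodRep_injective hζ) _ |>.mp hg

theorem rep_eval_zero_smul (g : BS M M) :
    Matrix.GeneralLinearGroup.map (evalRingHom 0) (rep hζ g) • ![1, -1] = ![(1 : R), -1] := by
  refine PresentedGroup.generated_by _ ((MulAction.stabilizer _ ![(1 : R), -1]).comap
    ((Matrix.GeneralLinearGroup.map (evalRingHom 0)).comp (rep hζ))) (fun i => ?_) g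
  rw [Subgroup.mem_comap, MulAction.mem_stabilizer_iff, MonoidHom.comp_apply]
  cases i
  · rw [show PresentedGroup.of false = BSa M M from rfl, rep_a]
    ext i; fin_cases i <;> simp [Units.smul_def, unipotent_val, Matrix.mulVec, dotProduct]
  · rw [show PresentedGroup.of true = BSb M M from rfl, rep_b]
    ext i; fin_cases i <;>
      simp [Units.smul_def, lowerTri_val, Matrix.mulVec, dotProduct, ← sub_eq_add_neg]

theorem rep_eq_one_of_val_eq_scalar [IsDomain R] {g : BS M M} {d : R[X]}
    (hg : (rep hζ g).val = Matrix.scalar (Fin 2) d) : rep hζ g = 1 := by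
  have hd : IsUnit d := by
    have := (rep hζ g).isUnit
    rw [hg, Matrix.isUnit_iff_isUnit_det, Matrix.det_fin_two] at this
    simpa using this
  obtain ⟨c, -, rfl⟩ := Polynomial.isUnit_iff.mp hd
  have hc : c = 1 := by
    simpa [Units.smul_def, hg, Matrix.mulVec, dotProduct] using
      congrFun (rep_eval_zero_smul hζ g) 0
  ext : 1
  rw [hg, hc, C_1, map_one, Units.val_one]

theorem not_commute_rep_of_injective [IsDomain R] [CharZero R] (hM : 1 < M)
    {φ : BS M M →* BS M M} (hφ : Function.Injective φ) :
    ¬ Commute (rep hζ (φ (BSa M M))) (rep hζ (φ (BSb M M))) := by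
  intro hcomm
  have hcentral : φ ⁅BSa M M, BSb M M⁆ ∈ Subgroup.center (BS M M) :=
    zpowers_b_zpow_le_center _ <| mem_zpowers_of_rep_eq_one hζ <| by
      rw [map_commutatorElement, map_commutatorElement,
        commutatorElement_eq_one_iff_commute.mpr hcomm]
  have hab : Commute ⁅BSa M M, BSb M M⁆ (BSb M M) :=
    hφ <| by rw [map_mul, map_mul]; exact (Subgroup.mem_center_iff.mp hcentral _).symm
  have hrep := hab.map (rep hζ)
  rw [map_commutatorElement, rep_a, rep_b] at hrep
  exact not_commute_commutator_unipotent_lowerTri (hζ.ne_one hM) hrep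

end Representation

end BaumslagSolitar

open BaumslagSolitar

/-- For `m > 1`, every injective endomorphism of `B(m,m)` maps the center `⟨bᵐ⟩`
into itself. -/
theorem BS_m_m_injective_maps_center (m : ℤ) (hm : 1 < m)
    (φ : BS m m →* BS m m) (hφ : Function.Injective φ) :
    ∀ g ∈ Subgroup.zpowers (BSb m m ^ m), φ g ∈ Subgroup.zpowers (BSb m m ^ m) := by
  obtain ⟨M, rfl⟩ : ∃ M : ℕ, (M : ℤ) = m := ⟨m.toNat, by omega⟩
  obtain ⟨ζ, hζ⟩ : ∃ ζ : ℂˣ, IsPrimitiveRoot ζ M :=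
    ⟨_, (Complex.isPrimitiveRoot_exp M (by omega)).isUnit_unit (by omega)⟩
  suffices h : φ (BSb M M ^ (M : ℤ)) ∈ Subgroup.zpowers (BSb M M ^ (M : ℤ)) by
    rintro _ ⟨k, rfl⟩
    simpa only [map_zpow] using Subgroup.zpow_mem _ h k
  by_cases hscalar : ∃ d, (rep hζ (φ (BSb M M ^ (M : ℤ)))).val = Matrix.scalar (Fin 2) d
  · obtain ⟨d, hd⟩ := hscalar
    exact mem_zpowers_of_rep_eq_one hζ (rep_eq_one_of_val_eq_scalar hζ hd)
  have hcentral (g : BS M M) :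
      Commute (rep hζ (φ (BSb M M ^ (M : ℤ)))).val (rep hζ (φ g)).val :=
    (((commute_b_zpow _ g).map φ).map (rep hζ)).map (Units.coeHom _)
  refine absurd (Units.ext ?_) (not_commute_rep_of_injective hζ (by omega) hφ)
  exact (Matrix.commute_of_commute_of_forall_ne_scalar (not_exists.mp hscalar)
    (hcentral _) (hcentral _)).eq
end
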